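/- Let P be a PFA with subset-construction DFA A, and let s = a_1…a_n be a string accepted by P via an accepting run tree τ. For each 0 ≤ i ≤ n, let L_i = {τ(u) : u at depth i in τ} and let S_i be the state of A after reading the first n−i letters of the corresponding run (so S_n = I). Then L_i ⊆ S_i for all 0 ≤ i ≤ n. -/
import Mathlib


/-- A Parallelized Finite Automaton (PFA). -/
structure PFA (Q : Type*) (σ : Type*) where
  Δ : Set (Set Q × σ × Q)
  I : Set Q
  F : Set Q

namespace PFA

variable {Q σ : Type*}

/-- A run tree of the PFA `M` over the string `s` with root label `q`:
leaves (over the empty string) carry initial states, and a node over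
`s ++ [a]` is justified by a transition `(P, a, q)` whose predecessor set `P`
is exactly the set of labels of its children (one child per state of `P`). -/
inductive RunTree (M : PFA Q σ) : List σ → Q → Type _ where
  | leaf (q : Q) (h : q ∈ M.I) : RunTree M [] q
  | node (s : List σ) (a : σ) (q : Q) (P : Set Q) (h : (P, a, q) ∈ M.Δ)
      (child : ∀ p, p ∈ P → RunTree M s p) : RunTree M (s ++ [a]) q

/-- The set of state labels occurring at depth `i` of a run tree
(the root is at depth `0`). -/
def RunTree.labelsAt {M : PFA Q σ} :
    {s : List σ} → {q : Q} → RunTree M s q → ℕ → Set Q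
  | _, q, .leaf _ _, 0 => {q}
  | _, _, .leaf _ _, _ + 1 => ∅
  | _, q, .node _ _ _ _ _ _, 0 => {q}
  | _, _, .node _ _ _ P _ child, i + 1 =>
      {r | ∃ p, ∃ hp : p ∈ P, r ∈ (child p hp).labelsAt i}

/-- The subset-construction DFA of a PFA. -/
def subsetDFA (M : PFA Q σ) : DFA σ (Set Q) where
  step := fun S a => {q | ∃ P ⊆ S, (P, a, q) ∈ M.Δ}
  start := M.I
  accept := {S | (S ∩ M.F).Nonempty}

end PFA

lemma PFA.RunTree.labelsAt_zero {Q σ : Type*} {M : PFA Q σ} {s : List σ} {q : Q}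
    (τ : PFA.RunTree M s q) : τ.labelsAt 0 = {q} := by
  cases τ <;> rfl

lemma labels_subset_aux {Q σ : Type*} (M : PFA Q σ) :
    ∀ {s : List σ} {q : Q} (τ : PFA.RunTree M s q) (i : ℕ), i ≤ s.length →
    τ.labelsAt i ⊆ M.subsetDFA.evalFrom M.subsetDFA.start (s.take (s.length - i)) := by
  intro s q τ
  induction τ with
  | leaf q h =>
    intro i hi
    obtain rfl : i = 0 := Nat.le_zero.mp (by simpa using hi)
    intro r hr
    simp only [PFA.RunTree.labelsAt, Set.mem_singleton_iff] at hr
    subst hr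
    simpa [DFA.evalFrom, PFA.subsetDFA] using h
  | node s a q P h child ih =>
    intro i hi
    match i with
    | 0 =>
      intro r hr
      rw [PFA.RunTree.labelsAt_zero] at hr
      simp only [Set.mem_singleton_iff] at hr
      subst hr
      simp only [Nat.sub_zero, List.take_length]
      rw [DFA.evalFrom_append_singleton]
      refine ⟨P, ?_, h⟩
      intro p hp
      have := ih p hp 0 (Nat.zero_le _)
      rw [PFA.RunTree.labelsAt_zero] at this
      simpa using this rfl
    | i + 1 =>
      have hi' : i ≤ s.length := by
        simp only [List.length_append, List.length_singleton] at hi; omega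
      intro r hr
      obtain ⟨p, hp, hr⟩ := hr
      have hlen : s.length + 1 - (i + 1) = s.length - i := by omega
      have htake : (s ++ [a]).take (s.length - i) = s.take (s.length - i) :=
        List.take_append_of_le_length (by omega)
      simp only [List.length_append, List.length_singleton, hlen, htake]
      exact ih p hp i hi' hr

/-- Let `τ` be an accepting run tree of a PFA `M` over
`s = a_1 … a_n`. For `0 ≤ i ≤ n`, the set `L_i` of labels at depth `i` of `τ`
is contained in the state `S_i` of the subset DFA after reading the first
`n - i` letters of `s` (so `S_n = I`). -/
theorem labels_subset_dfa_state {Q σ : Type*} (M : PFA Q σ) (s : List σ) (q : Q)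
    (hq : q ∈ M.F) (τ : PFA.RunTree M s q) (i : ℕ) (hi : i ≤ s.length) :
    τ.labelsAt i ⊆ M.subsetDFA.evalFrom M.subsetDFA.start (s.take (s.length - i)) :=
  labels_subset_aux M τ i hi
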